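/- For α > 1 there exist constants 0 < c ≤ C < ∞ (depending only on α) such that for all integers N ≥ 1, the expected number D_N of distinct values observed in N i.i.d. draws from the Zipf distribution p_j = j^{-α}/ζ(α) on the positive integers satisfies c·N^{1/α} ≤ E[D_N] ≤ C·N^{1/α}. -/

import Mathlib

/-!
For `0 ≤ p ≤ 1` one has `Np / (1 + Np) ≤ 1 - (1 - p)^N ≤ min 1 (Np)`, and `Np / (1 + Np)` is at
least `min 1 (Np) / 2`. Hence the expected number of distinct values lies between
`S / 2` and `S`, where `S = ∑ⱼ min 1 (N pⱼ)`. With `x = N^{1/α}` and `N pⱼ = (x / j)^α / ζ(α)`,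
each of the `⌊x⌋ ≥ x / 2` values `j ≤ x` contributes at least `1 / ζ(α)` to `S`, while the
values `j ≤ ⌈x⌉` contribute at most `x + 1` and, by the integral test, the tail contributes at
most `x^α ∫_{⌈x⌉}^∞ t^{-α} dt ≤ x / (α - 1)`.
-/

open Set MeasureTheory

section Occupancy

variable {p : ℝ}

theorem one_sub_one_sub_pow_le_mul (hp : p ≤ 2) (N : ℕ) : 1 - (1 - p) ^ N ≤ N * p := by
  have h := one_add_mul_le_pow (a := -p) (by linarith) N
  rw [← sub_eq_add_neg] at h
  linarith

theorem one_sub_pow_mul_one_add_mul_le_one (hp0 : 0 ≤ p) (hp1 : p ≤ 1) (N : ℕ) :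
    (1 - p) ^ N * (1 + N * p) ≤ 1 :=
  calc (1 - p) ^ N * (1 + N * p)
      ≤ (1 - p) ^ N * (1 + p) ^ N := by
        gcongr
        exact one_add_mul_le_pow (by linarith) N
    _ = (1 - p ^ 2) ^ N := by rw [← mul_pow]; ring
    _ ≤ 1 := pow_le_one₀ (by nlinarith) (by nlinarith)

theorem one_sub_one_sub_pow_le_min (hp1 : p ≤ 1) (N : ℕ) :
    1 - (1 - p) ^ N ≤ min 1 (N * p) :=
  le_min (by linarith [pow_nonneg (sub_nonneg.2 hp1) N])
    (one_sub_one_sub_pow_le_mul (by linarith) N)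

theorem min_one_mul_le_two_mul_one_sub_one_sub_pow (hp0 : 0 ≤ p) (hp1 : p ≤ 1) (N : ℕ) :
    min 1 (N * p) ≤ 2 * (1 - (1 - p) ^ N) := by
  have hq := pow_nonneg (sub_nonneg.2 hp1) N
  have key := one_sub_pow_mul_one_add_mul_le_one hp0 hp1 N
  have hx : 0 ≤ (N : ℝ) * p := by positivity
  rcases le_total ((N : ℝ) * p) 1 with h | h
  · rw [min_eq_right h]; nlinarith
  · rw [min_eq_left h]; nlinarith

end Occupancy

section OccupancyFamily

variable {ι : Type*} {p : ι → ℝ}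

theorem summable_min_one_mul (hp0 : ∀ i, 0 ≤ p i) (hp : Summable p) {t : ℝ} (ht : 0 ≤ t) :
    Summable fun i => min 1 (t * p i) :=
  Summable.of_nonneg_of_le (fun i => le_min zero_le_one (mul_nonneg ht (hp0 i)))
    (fun _ => min_le_right _ _) (hp.mul_left t)

theorem summable_one_sub_one_sub_pow (hp0 : ∀ i, 0 ≤ p i) (hp1 : ∀ i, p i ≤ 1)
    (hp : Summable p) (N : ℕ) :
    Summable fun i => 1 - (1 - p i) ^ N :=
  Summable.of_nonneg_of_le
    (fun i => sub_nonneg.2 (pow_le_one₀ (by linarith [hp1 i]) (by linarith [hp0 i])))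
    (fun i => (one_sub_one_sub_pow_le_min (hp1 i) N).trans (min_le_right _ _))
    (hp.mul_left (N : ℝ))

theorem tsum_one_sub_one_sub_pow_le_tsum_min (hp0 : ∀ i, 0 ≤ p i) (hp1 : ∀ i, p i ≤ 1)
    (hp : Summable p) (N : ℕ) :
    ∑' i, (1 - (1 - p i) ^ N) ≤ ∑' i, min 1 (N * p i) :=
  Summable.tsum_le_tsum (fun i => one_sub_one_sub_pow_le_min (hp1 i) N)
    (summable_one_sub_one_sub_pow hp0 hp1 hp N) (summable_min_one_mul hp0 hp N.cast_nonneg)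

theorem tsum_min_le_two_mul_tsum_one_sub_one_sub_pow (hp0 : ∀ i, 0 ≤ p i) (hp1 : ∀ i, p i ≤ 1)
    (hp : Summable p) (N : ℕ) :
    ∑' i, min 1 (N * p i) ≤ 2 * ∑' i, (1 - (1 - p i) ^ N) := by
  rw [← tsum_mul_left]
  exact Summable.tsum_le_tsum
    (fun i => min_one_mul_le_two_mul_one_sub_one_sub_pow (hp0 i) (hp1 i) N)
    (summable_min_one_mul hp0 hp N.cast_nonneg)
    ((summable_one_sub_one_sub_pow hp0 hp1 hp N).mul_left 2)

end OccupancyFamily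

section PSeries

variable {α : ℝ}

theorem summable_pnat_rpow_neg (hα : 1 < α) : Summable fun j : ℕ+ => ((j : ℕ) : ℝ) ^ (-α) :=
  (Real.summable_nat_rpow.2 (by linarith)).comp_injective PNat.coe_injective

theorem one_le_tsum_pnat_rpow_neg (hα : 1 < α) : 1 ≤ ∑' j : ℕ+, ((j : ℕ) : ℝ) ^ (-α) := by
  simpa using (summable_pnat_rpow_neg hα).le_tsum 1 (fun j _ => by positivity)

theorem tsum_nat_add_rpow_neg_le (hα : 1 < α) {M : ℕ} (hM : 0 < M) :
    ∑' n : ℕ, ((n + M + 1 : ℕ) : ℝ) ^ (-α) ≤ (M : ℝ) ^ (1 - α) / (α - 1) := by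
  have hM' : (0 : ℝ) < M := by exact_mod_cast hM
  calc _ ≤ ∫ t in Ioi (M : ℝ), t ^ (-α) :=
        ((Real.antitoneOn_rpow_Ioi_of_exponent_nonpos (by linarith)).mono
            (Ici_subset_Ioi.2 hM')).tsum_comp_add_le_integral M
          (integrableOn_Ioi_rpow_of_lt (by linarith) hM')
          (fun t ht => Real.rpow_nonneg (hM'.trans ht).le _)
    _ = _ := by
        rw [integral_Ioi_rpow_of_lt (by linarith) hM', neg_div, ← div_neg]
        ring_nf

theorem summable_min_one_rpow_mul_nat_succ (hα : 1 < α) {x : ℝ} (hx : 0 ≤ x) :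
    Summable fun n : ℕ => min 1 (x ^ α * ((n + 1 : ℕ) : ℝ) ^ (-α)) :=
  (summable_pnat_iff_summable_succ (f := fun n : ℕ => min 1 (x ^ α * (n : ℝ) ^ (-α)))).1 <|
    summable_min_one_mul (fun j => by positivity) (summable_pnat_rpow_neg hα)
      (Real.rpow_nonneg hx α)

theorem floor_le_tsum_min_one_rpow_mul (hα : 1 < α) {x : ℝ} (hx : 0 ≤ x) :
    (⌊x⌋₊ : ℝ) ≤ ∑' j : ℕ+, min 1 (x ^ α * ((j : ℕ) : ℝ) ^ (-α)) := by
  have hs := summable_min_one_rpow_mul_nat_succ hα hx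
  rw [tsum_pnat_eq_tsum_succ (f := fun n : ℕ => min 1 (x ^ α * (n : ℝ) ^ (-α)))]
  have hterm : ∀ n ∈ Finset.range ⌊x⌋₊, min 1 (x ^ α * ((n + 1 : ℕ) : ℝ) ^ (-α)) = 1 := by
    intro n hn
    have hnx : ((n + 1 : ℕ) : ℝ) ≤ x := (Nat.le_floor_iff hx).1 (Finset.mem_range.1 hn)
    have hpos : (0 : ℝ) < (n + 1 : ℕ) := by positivity
    refine min_eq_left ?_
    rw [Real.rpow_neg hpos.le, ← div_eq_mul_inv, one_le_div (by positivity)]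
    exact Real.rpow_le_rpow hpos.le hnx (by linarith)
  calc (⌊x⌋₊ : ℝ)
      = ∑ n ∈ Finset.range ⌊x⌋₊, min 1 (x ^ α * ((n + 1 : ℕ) : ℝ) ^ (-α)) := by
        rw [Finset.sum_congr rfl hterm]; simp
    _ ≤ _ := hs.sum_le_tsum _ (fun n _ => le_min zero_le_one (by positivity))

theorem tsum_min_one_rpow_mul_le (hα : 1 < α) {x : ℝ} (hx : 0 < x) :
    ∑' j : ℕ+, min 1 (x ^ α * ((j : ℕ) : ℝ) ^ (-α)) ≤ α / (α - 1) * x + 1 := by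
  have hs := summable_min_one_rpow_mul_nat_succ hα hx.le
  set M := ⌈x⌉₊
  have hM : 0 < M := Nat.ceil_pos.2 hx
  have hxM : x ≤ M := Nat.le_ceil x
  have hMx : (M : ℝ) < x + 1 := Nat.ceil_lt_add_one hx.le
  rw [tsum_pnat_eq_tsum_succ (f := fun n : ℕ => min 1 (x ^ α * (n : ℝ) ^ (-α))),
    ← hs.sum_add_tsum_nat_add M]
  have head : ∑ n ∈ Finset.range M, min 1 (x ^ α * ((n + 1 : ℕ) : ℝ) ^ (-α)) ≤ M :=
    (Finset.sum_le_sum fun _ _ => min_le_left _ _).trans (by simp)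
  have hs_tail : Summable fun n : ℕ => ((n + M + 1 : ℕ) : ℝ) ^ (-α) :=
    (summable_nat_add_iff (M + 1)).2 (Real.summable_nat_rpow.2 (by linarith))
  have tail : ∑' n : ℕ, min 1 (x ^ α * ((n + M + 1 : ℕ) : ℝ) ^ (-α)) ≤ x / (α - 1) :=
    calc _ ≤ ∑' n : ℕ, x ^ α * ((n + M + 1 : ℕ) : ℝ) ^ (-α) :=
          Summable.tsum_le_tsum (fun n => min_le_right _ _)
            (hs.comp_injective (add_left_injective M)) (hs_tail.mul_left _)
      _ = x ^ α * ∑' n : ℕ, ((n + M + 1 : ℕ) : ℝ) ^ (-α) := tsum_mul_left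
      _ ≤ x ^ α * ((M : ℝ) ^ (1 - α) / (α - 1)) := by
          gcongr; exact tsum_nat_add_rpow_neg_le hα hM
      _ ≤ x ^ α * (x ^ (1 - α) / (α - 1)) := by
          gcongr x ^ α * (?_ / _)
          exact Real.rpow_le_rpow_of_nonpos hx hxM (by linarith : 1 - α ≤ 0)
      _ = x / (α - 1) := by rw [← mul_div_assoc, ← Real.rpow_add hx]; norm_num
  have hα1 : 0 < α - 1 := by linarith
  calc _ ≤ (M : ℝ) + x / (α - 1) := add_le_add head tail
    _ ≤ α / (α - 1) * x + 1 := by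
        rw [div_mul_eq_mul_div, show α * x = x * (α - 1) + x by ring, add_div,
          mul_div_cancel_right₀ _ hα1.ne']
        linarith

end PSeries

section Zipf

variable {α : ℝ}

noncomputable def zipf (α : ℝ) (j : ℕ+) : ℝ :=
  ((j : ℕ) : ℝ) ^ (-α) / ∑' i : ℕ+, ((i : ℕ) : ℝ) ^ (-α)

theorem zipf_nonneg (j : ℕ+) : 0 ≤ zipf α j :=
  div_nonneg (by positivity) (tsum_nonneg fun _ => by positivity)

theorem zipf_le_one (hα : 1 < α) (j : ℕ+) : zipf α j ≤ 1 :=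
  div_le_one_of_le₀ ((summable_pnat_rpow_neg hα).le_tsum j fun _ _ => by positivity)
    (tsum_nonneg fun _ => by positivity)

theorem summable_zipf (hα : 1 < α) : Summable (zipf α) :=
  (summable_pnat_rpow_neg hα).div_const _

theorem tsum_min_one_mul_zipf_le (hα : 1 < α) {x : ℝ} (hx : 0 < x) :
    ∑' j, min 1 (x ^ α * zipf α j) ≤ α / (α - 1) * x + 1 := by
  have hxα : 0 ≤ x ^ α := Real.rpow_nonneg hx.le α
  refine le_trans (Summable.tsum_le_tsum (fun j => min_le_min_left 1 ?_)
    (summable_min_one_mul zipf_nonneg (summable_zipf hα) hxα)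
    (summable_min_one_mul (fun _ => by positivity) (summable_pnat_rpow_neg hα) hxα))
    (tsum_min_one_rpow_mul_le hα hx)
  exact mul_le_mul_of_nonneg_left
    (div_le_self (by positivity) (one_le_tsum_pnat_rpow_neg hα)) hxα

theorem div_le_tsum_min_one_mul_zipf (hα : 1 < α) {x : ℝ} (hx : 1 ≤ x) :
    x / (2 * ∑' i : ℕ+, ((i : ℕ) : ℝ) ^ (-α)) ≤ ∑' j, min 1 (x ^ α * zipf α j) := by
  set Z := ∑' i : ℕ+, ((i : ℕ) : ℝ) ^ (-α)
  have hZ : 1 ≤ Z := one_le_tsum_pnat_rpow_neg hα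
  have hxα : 0 ≤ x ^ α := Real.rpow_nonneg (by linarith) α
  have hfloor : x / 2 ≤ ⌊x⌋₊ := by
    have h1 : (1 : ℝ) ≤ ⌊x⌋₊ := by exact_mod_cast Nat.one_le_floor_iff x |>.2 hx
    linarith [Nat.lt_floor_add_one x]
  have hterm (j : ℕ+) :
      min 1 (x ^ α * ((j : ℕ) : ℝ) ^ (-α)) / Z ≤ min 1 (x ^ α * zipf α j) := by
    rw [← min_div_div_right (by linarith), zipf, mul_div_assoc]
    exact min_le_min_right _ (div_le_one_of_le₀ hZ (by linarith))
  calc x / (2 * Z) = x / 2 / Z := by rw [div_div]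
    _ ≤ (∑' j : ℕ+, min 1 (x ^ α * ((j : ℕ) : ℝ) ^ (-α))) / Z := by
        gcongr
        exact hfloor.trans (floor_le_tsum_min_one_rpow_mul hα (by linarith))
    _ = ∑' j : ℕ+, min 1 (x ^ α * ((j : ℕ) : ℝ) ^ (-α)) / Z := tsum_div_const.symm
    _ ≤ _ := Summable.tsum_le_tsum hterm
        ((summable_min_one_mul (fun _ => by positivity) (summable_pnat_rpow_neg hα)
          hxα).div_const Z)
        (summable_min_one_mul zipf_nonneg (summable_zipf hα) hxα)

end Zipf

/-- Zipf occupancy law: for the Zipf distribution `p_j = j^{-α}/ζ(α)` with `α > 1`, the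
expected number of distinct values in `N` i.i.d. draws, `∑_j (1 - (1 - p_j)^N)`, is
`Θ(N^{1/α})`. -/
theorem stmt10 (α : ℝ) (hα : 1 < α) :
    ∃ c C : ℝ, 0 < c ∧ c ≤ C ∧
      ∀ N : ℕ, 1 ≤ N →
        c * (N : ℝ) ^ (1 / α)
            ≤ (∑' j : ℕ+, (1 - (1 - ((j : ℕ) : ℝ) ^ (-α) / (∑' i : ℕ+, ((i : ℕ) : ℝ) ^ (-α))) ^ N)) ∧
        (∑' j : ℕ+, (1 - (1 - ((j : ℕ) : ℝ) ^ (-α) / (∑' i : ℕ+, ((i : ℕ) : ℝ) ^ (-α))) ^ N))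
            ≤ C * (N : ℝ) ^ (1 / α) := by
  have hZ := one_le_tsum_pnat_rpow_neg hα
  have hα1 : 0 < α / (α - 1) := div_pos (by linarith) (by linarith)
  refine ⟨1 / (4 * ∑' i : ℕ+, ((i : ℕ) : ℝ) ^ (-α)), α / (α - 1) + 1, by positivity,
    (div_le_one (by positivity)).2 (by linarith) |>.trans (by linarith), fun N hN => ?_⟩
  change _ ≤ ∑' j, (1 - (1 - zipf α j) ^ N) ∧ ∑' j, (1 - (1 - zipf α j) ^ N) ≤ _
  set x := (N : ℝ) ^ (1 / α)
  have hx : 1 ≤ x := Real.one_le_rpow (by exact_mod_cast hN) (by positivity)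
  have hNx : (N : ℝ) = x ^ α := by
    rw [← Real.rpow_mul N.cast_nonneg, one_div_mul_cancel (by positivity), Real.rpow_one]
  have lower := div_le_tsum_min_one_mul_zipf hα hx
  have upper := tsum_min_one_mul_zipf_le hα (by linarith : 0 < x)
  rw [← hNx] at lower upper
  have hE_ge := tsum_min_le_two_mul_tsum_one_sub_one_sub_pow zipf_nonneg (zipf_le_one hα)
    (summable_zipf hα) N
  have hE_le := tsum_one_sub_one_sub_pow_le_tsum_min zipf_nonneg (zipf_le_one hα)
    (summable_zipf hα) N
  constructor
  · calc _ = x / (2 * ∑' i : ℕ+, ((i : ℕ) : ℝ) ^ (-α)) / 2 := by ring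
      _ ≤ _ := by linarith
  · calc _ ≤ α / (α - 1) * x + 1 := hE_le.trans upper
      _ ≤ _ := by nlinarith
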